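/- arXiv:1605.06530 — 6 statements merged into one kernel-verified Lean document; each statement's English description precedes it below -/
import Mathlib

section
/- Let G be a finite connected weighted graph and let (τ_{ij}) be its coalescence times. Then τ^{(1)} + τ^{(2)} ≥ τ^{(3)}, with equality if and only if G has exactly two vertices and no self-loops. -/
/-!
Multiplying the coalescence system by `π_i p^{(n)}_{ij}`, summing over `i, j` and using
reversibility `π_i p_{ij} = π_j p_{ji}` gives `τ^{(n+1)} + 1 = τ^{(n)} + ∑_i π_i p^{(n)}_{ii} τ⁺_i`.
As `τ^{(0)} = 0`, the cases `n = 0` and `n = 2` yield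
`τ^{(1)} + τ^{(2)} - τ^{(3)} = ∑_i π_i (1 - p^{(2)}_{ii}) τ⁺_i`, a sum of nonnegative terms because
`τ ≥ 0` (minimum principle), so `τ⁺_i ≥ 1`. It vanishes iff `p^{(2)}_{ii} = 1` for all `i`, i.e. every
neighbour of `i` has `i` as its only neighbour; in a connected graph with at least two vertices this
means two vertices, one edge and no loops.
-/

open Finset Filter Asymptotics

noncomputable section

namespace EvoGraph

variable {V : Type*} [Fintype V] [DecidableEq V]

/-- Weighted degree `w_i = ∑_j w_{ij}`. -/
def deg (w : V → V → ℝ) (i : V) : ℝ := ∑ j, w i j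

/-- Total edge weight `W = ∑_i w_i`. -/
def Wtot (w : V → V → ℝ) : ℝ := ∑ i, deg w i

/-- Random-walk step probability `p_{ij} = w_{ij}/w_i`. -/
def step (w : V → V → ℝ) (i j : V) : ℝ := w i j / deg w i

/-- The stochastic matrix `(p_{ij})`. -/
def stepMat (w : V → V → ℝ) : Matrix V V ℝ := Matrix.of fun i j => step w i j

/-- `n`-step probability `p^{(n)}_{ij}`: the `(i,j)` entry of the `n`-th power of `(p_{ij})`. -/
def stepN (w : V → V → ℝ) (n : ℕ) (i j : V) : ℝ := (stepMat w ^ n) i j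

/-- Stationary distribution `π_i = w_i / W`. -/
def statDist (w : V → V → ℝ) (i : V) : ℝ := deg w i / Wtot w

/-- `w` is a finite connected weighted graph: symmetric nonnegative weights
(self-loops allowed), positive weighted degrees, and any two vertices joined by
a path of edges of positive weight. -/
def IsWeightedGraph (w : V → V → ℝ) : Prop :=
  (∀ i j, w i j = w j i) ∧ (∀ i j, 0 ≤ w i j) ∧ (∀ i, 0 < deg w i) ∧
  ∀ i j : V, Relation.ReflTransGen (fun a b => 0 < w a b) i j

/-- `τ` is the (symmetric) solution of the coalescence-time system:
`τ_{ii} = 0`, and `τ_{ij} = 1 + (1/2) ∑_k (p_{ik} τ_{kj} + p_{jk} τ_{ik})` for `i ≠ j`. -/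
def IsCoalescent (w : V → V → ℝ) (τ : V → V → ℝ) : Prop :=
  (∀ i j, τ i j = τ j i) ∧ (∀ i, τ i i = 0) ∧
  ∀ i j, i ≠ j →
    τ i j = 1 + (1 / 2) * ∑ k, (step w i k * τ k j + step w j k * τ i k)

/-- `τ^{(n)} = ∑_{i,j} π_i p^{(n)}_{ij} τ_{ij}`. -/
def tauWalk (w τ : V → V → ℝ) (n : ℕ) : ℝ :=
  ∑ i, ∑ j, statDist w i * stepN w n i j * τ i j

/-- Remeeting time `τ⁺_i = 1 + ∑_j p_{ij} τ_{ij}`. -/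
def remeet (w τ : V → V → ℝ) (i : V) : ℝ := 1 + ∑ j, step w i j * τ i j

end EvoGraph

namespace Matrix

variable {n R : Type*} [Fintype n] [DecidableEq n] [Ring R] [LinearOrder R]
  [IsStrictOrderedRing R] {M : Matrix n n R}

lemma apply_eq_one_iff_of_mem_rowStochastic (hM : M ∈ rowStochastic R n) (i j : n) :
    M i j = 1 ↔ ∀ k, k ≠ j → M i k = 0 := by
  have hsplit := add_sum_erase univ (M i) (mem_univ j)
  rw [sum_row_of_mem_rowStochastic hM i] at hsplit
  rw [← hsplit, left_eq_add, sum_eq_zero_iff_of_nonneg fun k _ => nonneg_of_mem_rowStochastic hM]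
  simp only [mem_erase, mem_univ, and_true]

lemma mul_self_apply_self_eq_one_iff (hM : M ∈ rowStochastic R n) (i : n) :
    (M * M) i i = 1 ↔ ∀ k, 0 < M i k → M k i = 1 := by
  have hgap : 1 - (M * M) i i = ∑ k, M i k * (1 - M k i) := by
    simp only [mul_sub, mul_one, sum_sub_distrib, sum_row_of_mem_rowStochastic hM, mul_apply]
  have hterm (k : n) : 0 ≤ M i k * (1 - M k i) :=
    mul_nonneg (nonneg_of_mem_rowStochastic hM) (sub_nonneg.2 (le_one_of_mem_rowStochastic hM))
  rw [← sub_eq_zero, ← neg_sub, neg_eq_zero, hgap, sum_eq_zero_iff_of_nonneg fun k _ => hterm k]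
  refine forall_congr' fun k => ?_
  simp only [mem_univ, true_implies, mul_eq_zero, sub_eq_zero]
  constructor
  · rintro (h | h) hpos
    exacts [absurd h hpos.ne', h.symm]
  · intro h
    rcases (nonneg_of_mem_rowStochastic hM (i := i) (j := k)).eq_or_lt with h0 | h0
    exacts [Or.inl h0.symm, Or.inr (h h0).symm]

end Matrix

namespace EvoGraph

open Matrix

variable {V : Type*} [Fintype V] {w : V → V → ℝ}

namespace IsWeightedGraph

lemma step_nonneg (hG : IsWeightedGraph w) (i j : V) : 0 ≤ step w i j :=
  div_nonneg (hG.2.1 i j) (hG.2.2.1 i).le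

lemma sum_step (hG : IsWeightedGraph w) (i : V) : ∑ j, step w i j = 1 := by
  unfold step
  rw [← sum_div, ← deg, div_self (hG.2.2.1 i).ne']

lemma step_pos_iff (hG : IsWeightedGraph w) (i j : V) : 0 < step w i j ↔ 0 < w i j :=
  div_pos_iff_of_pos_right (hG.2.2.1 i)

lemma step_eq_zero_iff (hG : IsWeightedGraph w) (i j : V) : step w i j = 0 ↔ w i j = 0 := by
  rw [step, div_eq_zero_iff, or_iff_left (hG.2.2.1 i).ne']

lemma Wtot_pos [Nonempty V] (hG : IsWeightedGraph w) : 0 < Wtot w :=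
  sum_pos (fun i _ => hG.2.2.1 i) univ_nonempty

lemma statDist_pos [Nonempty V] (hG : IsWeightedGraph w) (i : V) : 0 < statDist w i :=
  div_pos (hG.2.2.1 i) hG.Wtot_pos

lemma sum_statDist [Nonempty V] (hG : IsWeightedGraph w) : ∑ i, statDist w i = 1 := by
  unfold statDist
  rw [← sum_div, ← Wtot, div_self hG.Wtot_pos.ne']

lemma statDist_mul_step_comm (hG : IsWeightedGraph w) (i j : V) :
    statDist w i * step w i j = statDist w j * step w j i := by
  have := hG.2.2.1 i
  have := hG.2.2.1 j
  simp only [statDist, step]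
  field_simp
  rw [hG.1 i j]

lemma exists_pos (hG : IsWeightedGraph w) (i : V) : ∃ j, 0 < w i j := by
  obtain ⟨j, -, hj⟩ := exists_lt_of_sum_lt (s := univ) (f := 0) (g := w i)
    (by simpa [deg] using hG.2.2.1 i)
  exact ⟨j, hj⟩

lemma eq_univ_of_edge_closed (hG : IsWeightedGraph w) {S : Set V}
    (hS : ∀ a ∈ S, ∀ b, 0 < w a b → b ∈ S) {i : V} (hi : i ∈ S) : S = Set.univ := by
  refine Set.eq_univ_of_forall fun j => ?_
  induction hG.2.2.2 i j with
  | refl => exact hi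
  | tail _ hab ih => exact hS _ ih _ hab

lemma card_eq_two_and_loopless_iff (hG : IsWeightedGraph w) (hN : 2 ≤ Fintype.card V) :
    (Fintype.card V = 2 ∧ ∀ i, w i i = 0) ↔ ∀ i k, 0 < w i k → ∀ l, l ≠ i → w k l = 0 := by
  refine ⟨?_, ?_⟩
  · rintro ⟨hcard, hloop⟩ i k hik l hl
    have hki : k ≠ i := by
      rintro rfl
      exact hik.ne' (hloop k)
    rw [← Nat.card_eq_fintype_card, Nat.card_eq_two_iff' i] at hcard
    rw [hcard.unique hl hki, hloop]
  · intro H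
    have hpair (i j : V) (hij : 0 < w i j) (x : V) : x = i ∨ x = j := by
      have hji : 0 < w j i := hG.1 i j ▸ hij
      refine Set.eq_univ_iff_forall.1 (hG.eq_univ_of_edge_closed (S := {i, j}) ?_ (Or.inl rfl)) x
      rintro a (rfl | rfl) b hab <;> by_contra hb
      · exact hab.ne' (H j a hji b fun h => hb (Or.inr h))
      · exact hab.ne' (H i a hij b fun h => hb (Or.inl h))
    have hloop (i : V) : w i i = 0 := by
      by_contra h
      have hall := hpair i i ((hG.2.1 i i).lt_of_ne' h)
      simp only [or_self] at hall
      have hcard := Fintype.card_le_one_iff.2 fun x y => (hall x).trans (hall y).symm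
      omega
    obtain ⟨i⟩ : Nonempty V := Fintype.card_pos_iff.1 (by omega)
    obtain ⟨j, hij⟩ := hG.exists_pos i
    classical
    have hcard : Fintype.card V ≤ 2 :=
      (card_le_card fun x _ => by simpa using hpair i j hij x).trans card_le_two
    exact ⟨by omega, hloop⟩

end IsWeightedGraph

-- Minimum principle: at an off-diagonal minimum `m` of `τ` the recursion would give `m ≥ 1 + m`.
lemma IsCoalescent.nonneg (hG : IsWeightedGraph w) {τ : V → V → ℝ} (hτ : IsCoalescent w τ)
    (i j : V) : 0 ≤ τ i j := by
  have : Nonempty (V × V) := ⟨(i, j)⟩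
  obtain ⟨⟨a, b⟩, hmin⟩ := Finite.exists_min fun p : V × V => τ p.1 p.2
  suffices a = b by simpa [this, hτ.2.1] using hmin (i, j)
  by_contra hab
  have hle : ∑ k, (step w a k * τ a b + step w b k * τ a b) ≤
      ∑ k, (step w a k * τ k b + step w b k * τ a k) :=
    sum_le_sum fun k _ => add_le_add
      (mul_le_mul_of_nonneg_left (hmin (k, b)) (hG.step_nonneg a k))
      (mul_le_mul_of_nonneg_left (hmin (a, k)) (hG.step_nonneg b k))
  rw [sum_add_distrib, ← sum_mul, ← sum_mul, hG.sum_step, hG.sum_step] at hle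
  linarith [hτ.2.2 a b hab]

lemma IsCoalescent.one_le_remeet (hG : IsWeightedGraph w) {τ : V → V → ℝ}
    (hτ : IsCoalescent w τ) (i : V) : 1 ≤ remeet w τ i :=
  le_add_of_nonneg_right <| sum_nonneg fun j _ =>
    mul_nonneg (hG.step_nonneg i j) (hτ.nonneg hG i j)

variable [DecidableEq V]

lemma IsWeightedGraph.stepMat_mem_rowStochastic (hG : IsWeightedGraph w) :
    stepMat w ∈ rowStochastic ℝ V :=
  mem_rowStochastic_iff_sum.2 ⟨hG.step_nonneg, hG.sum_step⟩

lemma IsWeightedGraph.transpose_stepMat_mul_diagonal (hG : IsWeightedGraph w) :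
    (stepMat w)ᵀ * diagonal (statDist w) = diagonal (statDist w) * stepMat w := by
  ext i j
  simp [stepMat, mul_comm, hG.statDist_mul_step_comm i j]

lemma tauWalk_eq_trace (τ : V → V → ℝ) (n : ℕ) :
    tauWalk w τ n = trace (diagonal (statDist w) * stepMat w ^ n * (of τ)ᵀ) := by
  simp [tauWalk, trace, mul_apply, diagonal_apply, stepN]

lemma IsCoalescent.tauWalk_zero {τ : V → V → ℝ} (hτ : IsCoalescent w τ) :
    tauWalk w τ 0 = 0 := by
  simp [tauWalk, stepN, one_apply, hτ.2.1]

lemma IsCoalescent.matrix_eq {τ : V → V → ℝ} (hτ : IsCoalescent w τ) :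
    of (fun _ _ => (1 : ℝ)) + (1 / 2 : ℝ) • (stepMat w * of τ + of τ * (stepMat w)ᵀ) =
      of τ + diagonal (remeet w τ) := by
  ext i j
  rcases eq_or_ne i j with rfl | hij
  · simp only [one_div, stepMat, smul_add, Matrix.add_apply, of_apply, Matrix.smul_apply,
      mul_apply, hτ.1 _ i, mul_comm, smul_eq_mul, transpose_apply, hτ.2.1, diagonal_apply_eq,
      remeet, zero_add, add_right_inj]
    ring
  · simp [mul_apply, stepMat, hij, hτ.2.2 i j hij, mul_comm, sum_add_distrib, mul_add]

lemma IsCoalescent.tauWalk_succ_add_one [Nonempty V] (hG : IsWeightedGraph w)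
    {τ : V → V → ℝ} (hτ : IsCoalescent w τ) (n : ℕ) :
    tauWalk w τ (n + 1) + 1 =
      tauWalk w τ n + ∑ i, statDist w i * stepN w n i i * remeet w τ i := by
  have key := congrArg (fun M => trace (diagonal (statDist w) * stepMat w ^ n * M)) hτ.matrix_eq
  set D := diagonal (statDist w)
  set P := stepMat w
  have hτT : (of τ)ᵀ = of τ := by
    ext i j
    exact hτ.1 j i
  have hwalk (m : ℕ) : tauWalk w τ m = trace (D * P ^ m * of τ) := by
    rw [tauWalk_eq_trace, hτT]
  have hones : trace (D * P ^ n * of fun _ _ => (1 : ℝ)) = 1 := by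
    have hPn : P ^ n ∈ rowStochastic ℝ V := pow_mem hG.stepMat_mem_rowStochastic n
    simp only [trace, Matrix.diag, mul_apply, D, diagonal_apply, ite_mul, zero_mul, sum_ite_eq,
      mem_univ, if_true, of_apply, mul_one, ← mul_sum, sum_row_of_mem_rowStochastic hPn]
    exact hG.sum_statDist
  have hfirst : trace (D * P ^ n * (P * of τ)) = tauWalk w τ (n + 1) := by
    rw [hwalk, pow_succ, Matrix.mul_assoc D, Matrix.mul_assoc D, Matrix.mul_assoc]
  have hsecond : trace (D * P ^ n * (of τ * Pᵀ)) = tauWalk w τ (n + 1) := by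
    rw [hwalk, ← Matrix.mul_assoc, trace_mul_comm, ← Matrix.mul_assoc, ← Matrix.mul_assoc,
      hG.transpose_stepMat_mul_diagonal, pow_succ', Matrix.mul_assoc D P]
  have hdiag : trace (D * P ^ n * diagonal (remeet w τ)) =
      ∑ i, statDist w i * stepN w n i i * remeet w τ i := by
    simp [trace, D, P, stepN, mul_apply, diagonal_apply]
  simp only [Matrix.mul_add, Matrix.mul_smul, trace_add, trace_smul, hones, hfirst, hsecond,
    hdiag, ← hwalk, smul_eq_mul] at key
  linarith

lemma IsCoalescent.tauWalk_one_add_tauWalk_two_sub_tauWalk_three [Nonempty V]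
    (hG : IsWeightedGraph w) {τ : V → V → ℝ} (hτ : IsCoalescent w τ) :
    tauWalk w τ 1 + tauWalk w τ 2 - tauWalk w τ 3 =
      ∑ i, statDist w i * (1 - stepN w 2 i i) * remeet w τ i := by
  have h1 := hτ.tauWalk_succ_add_one hG 0
  have h3 := hτ.tauWalk_succ_add_one hG 2
  simp only [hτ.tauWalk_zero, stepN, pow_zero, one_apply_eq, mul_one] at h1
  simp only [mul_sub, sub_mul, mul_one, sum_sub_distrib]
  linarith

lemma IsWeightedGraph.forall_stepN_two_eq_one_iff (hG : IsWeightedGraph w) :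
    (∀ i, stepN w 2 i i = 1) ↔ ∀ i k, 0 < w i k → ∀ l, l ≠ i → w k l = 0 := by
  have hP := hG.stepMat_mem_rowStochastic
  simp only [stepN, sq, mul_self_apply_self_eq_one_iff hP,
    apply_eq_one_iff_of_mem_rowStochastic hP]
  simp only [stepMat, of_apply, hG.step_pos_iff, hG.step_eq_zero_iff]

/-- `τ^{(1)} + τ^{(2)} ≥ τ^{(3)}`, with equality iff `G` has
exactly two vertices and no self-loops. -/
theorem tau1_add_tau2_ge_tau3 (w : V → V → ℝ) (hG : IsWeightedGraph w)
    (hN : 2 ≤ Fintype.card V) (τ : V → V → ℝ) (hτ : IsCoalescent w τ) :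
    tauWalk w τ 1 + tauWalk w τ 2 ≥ tauWalk w τ 3 ∧
    (tauWalk w τ 1 + tauWalk w τ 2 = tauWalk w τ 3 ↔
      Fintype.card V = 2 ∧ ∀ i, w i i = 0) := by
  have : Nonempty V := Fintype.card_pos_iff.1 (by omega)
  have hgap := hτ.tauWalk_one_add_tauWalk_two_sub_tauWalk_three hG
  have hremeet_pos (i : V) : 0 < remeet w τ i := zero_lt_one.trans_le (hτ.one_le_remeet hG i)
  have hstep2_le (i : V) : stepN w 2 i i ≤ 1 :=
    le_one_of_mem_rowStochastic (pow_mem hG.stepMat_mem_rowStochastic 2)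
  have hterm (i : V) : 0 ≤ statDist w i * (1 - stepN w 2 i i) * remeet w τ i :=
    mul_nonneg (mul_nonneg (hG.statDist_pos i).le (sub_nonneg.2 (hstep2_le i))) (hremeet_pos i).le
  have hterm_eq_zero (i : V) :
      statDist w i * (1 - stepN w 2 i i) * remeet w τ i = 0 ↔ stepN w 2 i i = 1 := by
    simp only [mul_eq_zero, (hG.statDist_pos i).ne', (hremeet_pos i).ne', false_or, or_false,
      sub_eq_zero]
    exact eq_comm
  refine ⟨sub_nonneg.1 (hgap ▸ sum_nonneg fun i _ => hterm i), ?_⟩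
  rw [← sub_eq_zero, hgap, sum_eq_zero_iff_of_nonneg fun i _ => hterm i,
    hG.card_eq_two_and_loopless_iff hN, ← hG.forall_stepN_two_eq_one_iff]
  simp only [mem_univ, true_implies, hterm_eq_zero]

end EvoGraph
end
end

section
/- Let G be a finite connected weighted graph. Then the linear system of (N choose 2) equations τ_{ii} = 0 for all i and τ_{ij} = 1 + (1/2) Σ_{k∈V} (p_{ik} τ_{kj} + p_{jk} τ_{ik}) for all i ≠ j (with the unknowns required to be symmetric, τ_{ij} = τ_{ji}) has exactly one solution (τ_{ij})_{i,j∈V} in the real numbers. -/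
/-!
The system is `τ = b + A τ`, where `b` is `1` off the diagonal and `A` is the averaging operator
of the system, set to `0` on the diagonal. A maximum principle shows that `A` has no nonzero fixed
point: if `f = A f` had a positive maximum `M` at `(i₀, j₀)`, then `f (a, j₀) = M` with `a ≠ j₀`
forces `f (c, j₀) = M` for every neighbour `c` of `a`, because `f (a, j₀)` averages values `≤ M`;
following a path from `i₀` to `j₀` reaches `f (j₀, j₀) = 0`. Hence `id - A` is injective, so
bijective in finite dimension, and since the transpose of the solution solves the same system,
the solution is symmetric.
-/

open Finset Filter Asymptotics

noncomputable section

namespace EvoGraph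

lemma sum_mul_le_of_le {ι : Type*} [Fintype ι] {p x : ι → ℝ} {M : ℝ} (hp : ∀ k, 0 ≤ p k)
    (hp1 : ∑ k, p k = 1) (hx : ∀ k, x k ≤ M) : ∑ k, p k * x k ≤ M :=
  calc ∑ k, p k * x k ≤ ∑ k, p k * M :=
        sum_le_sum fun k _ => mul_le_mul_of_nonneg_left (hx k) (hp k)
    _ = M := by rw [← sum_mul, hp1, one_mul]

lemma eq_of_le_sum_mul {ι : Type*} [Fintype ι] {p x : ι → ℝ} {M : ℝ} (hp : ∀ k, 0 ≤ p k)
    (hp1 : ∑ k, p k = 1) (hx : ∀ k, x k ≤ M) (hM : M ≤ ∑ k, p k * x k) {c : ι} (hc : 0 < p c) :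
    x c = M := by
  have hgap : ∑ k, p k * (M - x k) = 0 := by
    have hsum : ∑ k, p k * (M - x k) = M - ∑ k, p k * x k := by
      simp only [mul_sub, sum_sub_distrib, ← sum_mul, hp1, one_mul]
    have hnonneg : 0 ≤ ∑ k, p k * (M - x k) :=
      sum_nonneg fun k _ => mul_nonneg (hp k) (sub_nonneg.2 (hx k))
    linarith
  have hc0 : p c * (M - x c) = 0 :=
    (sum_eq_zero_iff_of_nonneg fun k _ => mul_nonneg (hp k) (sub_nonneg.2 (hx k))).1 hgap c
      (mem_univ c)
  linarith [(mul_eq_zero.1 hc0).resolve_left hc.ne']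

variable {V : Type*} [Fintype V] {w : V → V → ℝ}

lemma IsWeightedGraph.step_nonneg_s5 (hG : IsWeightedGraph w) (i k : V) : 0 ≤ step w i k :=
  div_nonneg (hG.2.1 i k) (hG.2.2.1 i).le

lemma IsWeightedGraph.step_pos (hG : IsWeightedGraph w) {i k : V} (h : 0 < w i k) :
    0 < step w i k :=
  div_pos h (hG.2.2.1 i)

lemma IsWeightedGraph.sum_step_s5 (hG : IsWeightedGraph w) (i : V) : ∑ k, step w i k = 1 := by
  simp only [step, ← sum_div]
  exact div_self (hG.2.2.1 i).ne'

variable [DecidableEq V]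

def offDiagAvg (w : V → V → ℝ) : (V → V → ℝ) →ₗ[ℝ] (V → V → ℝ) where
  toFun f i j := if i = j then 0 else (1 / 2) * ∑ k, (step w i k * f k j + step w j k * f i k)
  map_add' f g := by
    funext i j
    simp only [Pi.add_apply]
    split_ifs
    · ring
    · simp only [mul_add, sum_add_distrib]
      ring
  map_smul' c f := by
    funext i j
    simp only [Pi.smul_apply, smul_eq_mul, RingHom.id_apply]
    split_ifs
    · ring
    · simp only [mul_sum]
      exact sum_congr rfl fun k _ => by ring

lemma offDiagAvg_apply (w f : V → V → ℝ) (i j : V) :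
    offDiagAvg w f i j =
      if i = j then 0 else (1 / 2) * ∑ k, (step w i k * f k j + step w j k * f i k) :=
  rfl

lemma offDiagAvg_swap (w f : V → V → ℝ) :
    offDiagAvg w (fun i j => f j i) = fun i j => offDiagAvg w f j i := by
  funext i j
  simp only [offDiagAvg_apply, eq_comm (a := i)]
  split_ifs
  · rfl
  · exact congrArg _ (sum_congr rfl fun k _ => add_comm _ _)

lemma le_zero_of_offDiagAvg_eq (hG : IsWeightedGraph w) {f : V → V → ℝ}
    (hf : offDiagAvg w f = f) (i j : V) : f i j ≤ 0 := by
  have hf' (a b : V) : f a b = offDiagAvg w f a b := by rw [hf]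
  by_contra! hpos
  obtain ⟨⟨i₀, j₀⟩, -, hmax⟩ :=
    exists_max_image univ (fun p : V × V => f p.1 p.2) ⟨(i, j), mem_univ _⟩
  set M := f i₀ j₀
  have hle (a b : V) : f a b ≤ M := hmax (a, b) (mem_univ _)
  have hM : 0 < M := hpos.trans_le (hle i j)
  have hdiag : f j₀ j₀ = 0 := by rw [hf', offDiagAvg_apply, if_pos rfl]
  have hpropagate {a c : V} (hac : 0 < w a c) (ha : f a j₀ = M) : f c j₀ = M := by
    have hne : a ≠ j₀ := by rintro rfl; linarith
    have havg : M = (1 / 2) * (∑ k, step w a k * f k j₀ + ∑ k, step w j₀ k * f a k) := by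
      rw [← ha, hf', offDiagAvg_apply, if_neg hne, sum_add_distrib]
    have hsecond : ∑ k, step w j₀ k * f a k ≤ M :=
      sum_mul_le_of_le (hG.step_nonneg_s5 j₀) (hG.sum_step_s5 j₀) (hle a)
    exact eq_of_le_sum_mul (hG.step_nonneg_s5 a) (hG.sum_step_s5 a) (hle · j₀) (by linarith)
      (hG.step_pos hac)
  have hreach : ∀ b, Relation.ReflTransGen (fun a b => 0 < w a b) i₀ b → f b j₀ = M := by
    intro b hb
    induction hb with
    | refl => rfl
    | tail _ hbc ih => exact hpropagate hbc ih
  linarith [hreach j₀ (hG.2.2.2 i₀ j₀)]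

def coalOp (w : V → V → ℝ) : (V → V → ℝ) →ₗ[ℝ] (V → V → ℝ) := LinearMap.id - offDiagAvg w

lemma coalOp_apply (w f : V → V → ℝ) (i j : V) : coalOp w f i j = f i j - offDiagAvg w f i j :=
  rfl

lemma injective_coalOp (hG : IsWeightedGraph w) :
    Function.Injective (coalOp w) := by
  rw [← LinearMap.ker_eq_bot, LinearMap.ker_eq_bot']
  intro f hf
  have hfix : offDiagAvg w f = f := (sub_eq_zero.1 hf).symm
  have hfix_neg : offDiagAvg w (-f) = -f := by rw [map_neg, hfix]
  funext i j
  have hneg : -f i j ≤ 0 := le_zero_of_offDiagAvg_eq hG hfix_neg i j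
  exact le_antisymm (le_zero_of_offDiagAvg_eq hG hfix i j) (neg_nonpos.1 hneg)

lemma isCoalescent_iff (w τ : V → V → ℝ) :
    IsCoalescent w τ ↔ (∀ i j, τ i j = τ j i) ∧
      coalOp w τ = fun i j => if i = j then 0 else 1 := by
  simp only [IsCoalescent, funext_iff, coalOp_apply, offDiagAvg_apply]
  refine and_congr_right fun _ =>
    ⟨fun ⟨hdiag, hoff⟩ i j => ?_, fun h => ⟨fun i => ?_, fun i j hij => ?_⟩⟩
  · split_ifs with hij
    · simp [hij, hdiag]
    · linarith [hoff i j hij]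
  · simpa using h i i
  · have := h i j
    simp only [if_neg hij] at this
    linarith

theorem coalescent_existsUnique_general (w : V → V → ℝ) (hG : IsWeightedGraph w) :
    ∃! τ : V → V → ℝ, IsCoalescent w τ := by
  set b : V → V → ℝ := fun i j => if i = j then 0 else 1
  have hinj : Function.Injective (coalOp w) := injective_coalOp hG
  obtain ⟨τ, hτ⟩ := LinearMap.injective_iff_surjective.1 hinj b
  have hswap : coalOp w (fun i j => τ j i) = b := by
    funext i j
    rw [coalOp_apply, offDiagAvg_swap, ← coalOp_apply, hτ]
    simp only [b, eq_comm]
  have hsymm : ∀ i j, τ i j = τ j i := fun i j =>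
    congrFun (congrFun (hinj (hswap.trans hτ.symm)) j) i
  refine ⟨τ, (isCoalescent_iff w τ).2 ⟨hsymm, hτ⟩, fun σ hσ => hinj ?_⟩
  rw [hτ, ((isCoalescent_iff w σ).1 hσ).2]

/-- the coalescence-time system (`τ_{ii} = 0`,
`τ_{ij} = 1 + (1/2)∑_k (p_{ik} τ_{kj} + p_{jk} τ_{ik})` for `i ≠ j`, with the
unknowns required to be symmetric) has exactly one real solution. -/
theorem coalescent_existsUnique (w : V → V → ℝ) (hG : IsWeightedGraph w)
    (hN : 2 ≤ Fintype.card V) :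
    ∃! τ : V → V → ℝ, IsCoalescent w τ :=
  coalescent_existsUnique_general w hG

end EvoGraph
end
end

section
/- Let G be a finite connected weighted graph with coalescence times (τ_{ij}). For every integer n ≥ 0, τ^{(n+1)} = τ^{(n)} + Σ_{i∈V} π_i p^{(n)}_{ii} τ⁺_i − 1, where τ⁺_i = 1 + Σ_{j∈V} p_{ij} τ_{ij} is the remeeting time at vertex i. -/
/-!
Weight the coalescence equation of the pair `(i, j)` by `π_i p^{(n)}_{ij}` and sum over all
pairs; on the diagonal, where `τ_{ii} = 0`, the right-hand side is exactly `τ⁺_i`. The constant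
term sums to `1`, and each of the two averaged one-step terms equals `τ^{(n+1)}`: one by
`p^{(n+1)} = p^{(n)} p`, the other after exchanging `i` and `j`, which is legitimate because
`τ` is symmetric and so is `π_i p^{(n)}_{ij}`, by reversibility of the walk.
-/

open Finset Filter Asymptotics

noncomputable section

namespace EvoGraph

variable {V : Type*} [Fintype V] [DecidableEq V]

section

variable {w τ : V → V → ℝ}

omit [DecidableEq V] in
theorem sum_step_eq_one (hdeg : ∀ i, 0 < deg w i) (i : V) : ∑ j, step w i j = 1 := by
  rw [← div_self (hdeg i).ne', deg, Finset.sum_div]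
  rfl

omit [DecidableEq V] in
theorem sum_statDist_eq_one [Nonempty V] (hdeg : ∀ i, 0 < deg w i) : ∑ i, statDist w i = 1 := by
  have hW : 0 < Wtot w := Finset.sum_pos (fun i _ => hdeg i) Finset.univ_nonempty
  rw [← div_self hW.ne', Wtot, Finset.sum_div]
  rfl

omit [DecidableEq V] in
/-- Detailed balance: both sides equal `w i j / Wtot w`. -/
theorem statDist_mul_step_comm (hsym : ∀ i j, w i j = w j i) (hdeg : ∀ i, 0 < deg w i)
    (i j : V) : statDist w i * step w i j = statDist w j * step w j i := by
  simp only [statDist, step, hsym i j]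
  field_simp [(hdeg i).ne', (hdeg j).ne']

theorem stepMat_mem_rowStochastic (hnn : ∀ i j, 0 ≤ w i j) (hdeg : ∀ i, 0 < deg w i) :
    stepMat w ∈ Matrix.rowStochastic ℝ V :=
  Matrix.mem_rowStochastic_iff_sum.2
    ⟨fun i j => div_nonneg (hnn i j) (hdeg i).le, sum_step_eq_one hdeg⟩

/-- `jointN w n i j = π_i p^{(n)}_{ij}`, the law of `(X₀, Xₙ)` for the stationary walk. -/
def jointN (w : V → V → ℝ) (n : ℕ) : Matrix V V ℝ :=
  Matrix.diagonal (statDist w) * stepMat w ^ n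

theorem jointN_apply (n : ℕ) (i j : V) : jointN w n i j = statDist w i * stepN w n i j :=
  Matrix.diagonal_mul _ _ _ _

theorem tauWalk_eq_sum_jointN (n : ℕ) : tauWalk w τ n = ∑ i, ∑ j, jointN w n i j * τ i j := by
  simp only [tauWalk, jointN_apply]

theorem jointN_succ_apply (n : ℕ) (i k : V) :
    jointN w (n + 1) i k = ∑ j, jointN w n i j * step w j k := by
  rw [jointN, pow_succ, ← mul_assoc, Matrix.mul_apply]
  rfl

theorem sum_jointN_eq_one [Nonempty V] (hnn : ∀ i j, 0 ≤ w i j) (hdeg : ∀ i, 0 < deg w i)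
    (n : ℕ) : ∑ i, ∑ j, jointN w n i j = 1 := by
  have hP := Submonoid.pow_mem _ (stepMat_mem_rowStochastic hnn hdeg) n
  simp only [jointN_apply, ← Finset.mul_sum, stepN,
    Matrix.sum_row_of_mem_rowStochastic hP, mul_one, sum_statDist_eq_one hdeg]

/-- Reversibility `Π P = Pᵀ Π` propagates to `Π Pⁿ = (Pᵀ)ⁿ Π`. -/
theorem isSymm_jointN (hsym : ∀ i j, w i j = w j i) (hdeg : ∀ i, 0 < deg w i) (n : ℕ) :
    (jointN w n).IsSymm := by
  have hrev : SemiconjBy (Matrix.diagonal (statDist w)) (stepMat w) (stepMat w).transpose := by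
    ext i j
    simp only [Matrix.diagonal_mul, Matrix.mul_diagonal, Matrix.transpose_apply, stepMat,
      Matrix.of_apply]
    rw [statDist_mul_step_comm hsym hdeg, mul_comm]
  rw [Matrix.IsSymm, jointN, Matrix.transpose_mul, Matrix.diagonal_transpose,
    Matrix.transpose_pow]
  exact (hrev.pow_right n).symm

theorem sum_jointN_mul_sum_step_mul_right (n : ℕ) :
    ∑ i, ∑ j, jointN w n i j * ∑ k, step w j k * τ i k = tauWalk w τ (n + 1) := by
  simp only [tauWalk_eq_sum_jointN, jointN_succ_apply, Finset.mul_sum, Finset.sum_mul]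
  refine Finset.sum_congr rfl fun i _ => Finset.sum_comm.trans ?_
  simp only [mul_assoc]

theorem sum_jointN_mul_sum_step_mul_left (hsym : ∀ i j, w i j = w j i)
    (hdeg : ∀ i, 0 < deg w i) (hτ : ∀ i j, τ i j = τ j i) (n : ℕ) :
    ∑ i, ∑ j, jointN w n i j * ∑ k, step w i k * τ k j = tauWalk w τ (n + 1) := by
  rw [Finset.sum_comm, ← sum_jointN_mul_sum_step_mul_right]
  simp only [(isSymm_jointN hsym hdeg n).apply, hτ]

theorem IsCoalescent.add_ite_remeet (hτ : IsCoalescent w τ) (i j : V) :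
    τ i j + (if i = j then remeet w τ i else 0) =
      1 + (1 / 2) * ∑ k, (step w i k * τ k j + step w j k * τ i k) := by
  obtain ⟨hsymm, hdiag, hrec⟩ := hτ
  by_cases h : i = j
  · subst h
    simp only [if_pos, hdiag, remeet, hsymm _ i, Finset.sum_add_distrib]
    ring
  · rw [if_neg h, add_zero, hrec i j h]

end

/-- for every `n ≥ 0`,
`τ^{(n+1)} = τ^{(n)} + ∑_i π_i p^{(n)}_{ii} τ⁺_i − 1`. -/
theorem tauWalk_succ (w : V → V → ℝ) (hG : IsWeightedGraph w)
    (hN : 2 ≤ Fintype.card V) (τ : V → V → ℝ) (hτ : IsCoalescent w τ) (n : ℕ) :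
    tauWalk w τ (n + 1) =
      tauWalk w τ n + (∑ i, statDist w i * stepN w n i i * remeet w τ i) - 1 := by
  obtain ⟨hsym, hnn, hdeg, -⟩ := hG
  have : Nonempty V := Fintype.card_pos_iff.mp (by omega)
  have hsum : ∑ i, ∑ j, jointN w n i j * (τ i j + if i = j then remeet w τ i else 0) =
      ∑ i, ∑ j, (jointN w n i j + (1 / 2) * (jointN w n i j * ∑ k, step w i k * τ k j)
        + (1 / 2) * (jointN w n i j * ∑ k, step w j k * τ i k)) := by
    refine Finset.sum_congr rfl fun i _ => Finset.sum_congr rfl fun j _ => ?_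
    rw [hτ.add_ite_remeet, Finset.sum_add_distrib]
    ring
  simp only [mul_add, mul_ite, mul_zero, Finset.sum_add_distrib, Finset.sum_ite_eq,
    Finset.mem_univ, if_true, ← Finset.mul_sum] at hsum
  rw [← tauWalk_eq_sum_jointN, sum_jointN_eq_one hnn hdeg, sum_jointN_mul_sum_step_mul_right,
    sum_jointN_mul_sum_step_mul_left hsym hdeg hτ.1] at hsum
  simp only [jointN_apply] at hsum
  linarith

end EvoGraph
end
end

section
/- Let G be a finite connected weighted graph with coalescence times (τ_{ij}) and remeeting times τ⁺_i = 1 + Σ_{j∈V} p_{ij} τ_{ij}. Then Σ_{i∈V} π_i² τ⁺_i = 1. -/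
/-! Put `S = ∑_{i,j} π_i π_j τ_{ij}` and let `g_{ij}` be the right-hand side of the coalescence
recurrence, so that `τ_{ij} = g_{ij}` off the diagonal while `τ_{ii} = 0 = g_{ii} - τ⁺_i`.
Averaging `g` against `π ⊗ π`, stationarity of `π` turns each one-step term back into `S`, so
`∑ π_i π_j g_{ij} = 1 + S`. Hence `S = (1 + S) - ∑_i π_i² τ⁺_i`. -/

open Finset Filter Asymptotics

noncomputable section

namespace EvoGraph

variable {V : Type*} [Fintype V]

def IsStationary (p : V → V → ℝ) (π : V → ℝ) : Prop :=
  ∀ k, ∑ i, π i * p i k = π k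

section Stationary

variable {p : V → V → ℝ} {π : V → ℝ}

theorem IsStationary.sum_sum_mul_sum_left (hstat : IsStationary p π) (f : V → V → ℝ) :
    ∑ i, ∑ j, π i * π j * ∑ k, p i k * f k j = ∑ i, ∑ j, π i * π j * f i j :=
  calc ∑ i, ∑ j, π i * π j * ∑ k, p i k * f k j
      = ∑ i, ∑ k, π i * p i k * ∑ j, π j * f k j := sum_congr rfl fun i _ => by
        simp only [mul_sum]
        rw [sum_comm]
        exact sum_congr rfl fun k _ => sum_congr rfl fun j _ => by ring
    _ = ∑ k, (∑ i, π i * p i k) * ∑ j, π j * f k j := by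
        rw [sum_comm]
        simp only [sum_mul]
    _ = ∑ i, ∑ j, π i * π j * f i j := by
        simp only [hstat _, mul_sum, mul_assoc]

theorem IsStationary.sum_sum_mul_sum_right (hstat : IsStationary p π) (f : V → V → ℝ) :
    ∑ i, ∑ j, π i * π j * ∑ k, p j k * f i k = ∑ i, ∑ j, π i * π j * f i j := by
  rw [sum_comm, sum_comm (f := fun i j => π i * π j * f i j)]
  convert hstat.sum_sum_mul_sum_left fun a b => f b a using 3 <;> ring

theorem IsStationary.sum_sq_mul_one_add_sum_mul_eq_one [DecidableEq V] (hstat : IsStationary p π)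
    (hπ : ∑ i, π i = 1) (τ : V → V → ℝ) (hsymm : ∀ i j, τ i j = τ j i)
    (hdiag : ∀ i, τ i i = 0)
    (hrec : ∀ i j, i ≠ j → τ i j = 1 + (1 / 2) * ∑ k, (p i k * τ k j + p j k * τ i k)) :
    ∑ i, π i ^ 2 * (1 + ∑ j, p i j * τ i j) = 1 := by
  set g : V → V → ℝ := fun i j => 1 + (1 / 2) * ∑ k, (p i k * τ k j + p j k * τ i k)
  have hg_diag : ∀ i, g i i = 1 + ∑ j, p i j * τ i j := fun i => by
    simp only [g, hsymm _ i, ← two_mul, ← mul_sum]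
    ring
  have hτ : ∀ i j, τ i j = g i j - if i = j then g i i else 0 := fun i j => by
    rcases eq_or_ne i j with rfl | h
    · simp [hdiag]
    · simp [h, hrec i j h, g]
  have hmean : ∑ i, ∑ j, π i * π j * g i j = 1 + ∑ i, ∑ j, π i * π j * τ i j := by
    have hsplit : ∀ i j, π i * π j * g i j = π i * π j + (1 / 2) *
        (π i * π j * ∑ k, p i k * τ k j + π i * π j * ∑ k, p j k * τ i k) := fun i j => by
      simp only [g, sum_add_distrib]
      ring
    simp only [hsplit, sum_add_distrib, ← mul_sum, hstat.sum_sum_mul_sum_left,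
      hstat.sum_sum_mul_sum_right, ← sum_mul, hπ]
    ring
  have hS : ∑ i, ∑ j, π i * π j * τ i j
      = ∑ i, ∑ j, π i * π j * g i j - ∑ i, π i ^ 2 * g i i := by
    simp only [hτ, mul_sub, mul_ite, mul_zero, sum_sub_distrib, sum_ite_eq, mem_univ, if_true, sq]
  simp only [hg_diag] at hS
  linarith

end Stationary

section WeightedGraph

variable (w : V → V → ℝ)

theorem Wtot_pos [Nonempty V] (hdeg : ∀ i, 0 < deg w i) : 0 < Wtot w :=
  sum_pos (fun i _ => hdeg i) univ_nonempty

theorem sum_statDist (hW : Wtot w ≠ 0) : ∑ i, statDist w i = 1 := by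
  simp only [statDist, ← sum_div]
  exact div_self hW

theorem isStationary_statDist (hsymm : ∀ i j, w i j = w j i) (hdeg : ∀ i, deg w i ≠ 0) :
    IsStationary (step w) (statDist w) := by
  intro k
  have hcancel : ∀ i, statDist w i * step w i k = w k i / Wtot w := fun i => by
    rw [statDist, step, hsymm, div_mul_div_comm, mul_comm, mul_div_mul_right _ _ (hdeg i)]
  rw [sum_congr rfl fun i _ => hcancel i, ← sum_div]
  rfl

end WeightedGraph

variable [DecidableEq V]

/-- `∑_i π_i² τ⁺_i = 1`. -/
theorem sum_statDist_sq_remeet (w : V → V → ℝ) (hG : IsWeightedGraph w)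
    (hN : 2 ≤ Fintype.card V) (τ : V → V → ℝ) (hτ : IsCoalescent w τ) :
    ∑ i, (statDist w i) ^ 2 * remeet w τ i = 1 := by
  obtain ⟨hsymm, -, hdeg, -⟩ := hG
  obtain ⟨hτ_symm, hτ_diag, hτ_rec⟩ := hτ
  have : Nonempty V := Fintype.card_pos_iff.mp (by omega)
  exact (isStationary_statDist w hsymm fun i => (hdeg i).ne').sum_sq_mul_one_add_sum_mul_eq_one
    (sum_statDist w (Wtot_pos w hdeg).ne') τ hτ_symm hτ_diag hτ_rec

end EvoGraph
end
end

section
/- Let G be the unweighted complete bipartite graph K_{a,b} with a, b ≥ 1 and a + b ≥ 3: the vertex set is the disjoint union of sets V₁, V₂ with |V₁| = a, |V₂| = b, w_{ij} = 1 whenever i and j lie in different parts, and w_{ij} = 0 otherwise. Let (τ_{ij}) be the coalescence times of G. Then τ^{(3)} = τ^{(1)}; consequently the critical benefit-to-cost ratio τ^{(2)}/(τ^{(3)} − τ^{(1)}) is undefined (its denominator vanishes) and cooperation is never favored on a complete bipartite graph. -/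
/-! On `K_{a,b}` the random walk jumps to a uniformly chosen vertex of the other part. After two
steps it is therefore at a uniform vertex of its own part, and a third step forgets where it
started, so `p^{(3)} = p^{(1)}`. Hence `τ^{(3)}` and `τ^{(1)}` are the same weighted sum of the
`τ_{ij}`, whatever the coalescence times are. -/

open Finset Filter Asymptotics

noncomputable section

namespace EvoGraph

variable {V : Type*} [Fintype V] [DecidableEq V]

/-- The unweighted complete bipartite graph `K_{a,b}`: weight `1` between
vertices in different parts, and `0` otherwise. -/
def bipW (a b : ℕ) : (Fin a ⊕ Fin b) → (Fin a ⊕ Fin b) → ℝ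
  | Sum.inl _, Sum.inr _ => 1
  | Sum.inr _, Sum.inl _ => 1
  | _, _ => 0

lemma of_const_mul_of_const {l m n : Type*} [Fintype m] (x y : ℝ) :
    (Matrix.of fun (_ : l) (_ : m) => x) * (Matrix.of fun (_ : m) (_ : n) => y) =
      Matrix.of fun _ _ => Fintype.card m * x * y := by
  ext i k
  simp [Matrix.mul_apply, mul_assoc]

lemma fromBlocks_uniform_antidiag_pow_three {m n : Type*} [Fintype m] [Fintype n]
    [DecidableEq m] [DecidableEq n] {x y : ℝ}
    (hx : Fintype.card n * x = 1) (hy : Fintype.card m * y = 1) :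
    (Matrix.fromBlocks 0 (Matrix.of fun _ _ => x) (Matrix.of fun _ _ => y) 0 :
        Matrix (m ⊕ n) (m ⊕ n) ℝ) ^ 3 =
      Matrix.fromBlocks 0 (Matrix.of fun _ _ => x) (Matrix.of fun _ _ => y) 0 := by
  simp only [pow_three, Matrix.fromBlocks_multiply, of_const_mul_of_const,
    Matrix.zero_mul, Matrix.mul_zero, add_zero, zero_add]
  congr 2 <;> funext _ _
  · linear_combination x * hy + (Fintype.card m * y) * x * hx
  · linear_combination y * hx + (Fintype.card n * x) * y * hy

section CompleteBipartite

variable {a b : ℕ}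

@[simp]
lemma deg_bipW_inl (i : Fin a) : deg (bipW a b) (Sum.inl i) = b := by
  simp [deg, bipW, Fintype.sum_sum_type]

@[simp]
lemma deg_bipW_inr (j : Fin b) : deg (bipW a b) (Sum.inr j) = a := by
  simp [deg, bipW, Fintype.sum_sum_type]

lemma stepMat_bipW :
    stepMat (bipW a b) =
      Matrix.fromBlocks 0 (Matrix.of fun _ _ => (b : ℝ)⁻¹) (Matrix.of fun _ _ => (a : ℝ)⁻¹) 0 := by
  ext (i | i) (j | j) <;> simp [stepMat, step, bipW]

lemma stepMat_bipW_pow_three (ha : a ≠ 0) (hb : b ≠ 0) :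
    stepMat (bipW a b) ^ 3 = stepMat (bipW a b) := by
  rw [stepMat_bipW]
  exact fromBlocks_uniform_antidiag_pow_three (by simp [hb]) (by simp [ha])

end CompleteBipartite

lemma tauWalk_congr_of_stepMat_pow_eq {w : V → V → ℝ} (τ : V → V → ℝ) {m n : ℕ}
    (h : stepMat w ^ m = stepMat w ^ n) : tauWalk w τ m = tauWalk w τ n := by
  simp only [tauWalk, stepN, h]

theorem completeBipartite_tau3_eq_tau1_general (a b : ℕ) (ha : 1 ≤ a) (hb : 1 ≤ b)
    (τ : (Fin a ⊕ Fin b) → (Fin a ⊕ Fin b) → ℝ) :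
    tauWalk (bipW a b) τ 3 = tauWalk (bipW a b) τ 1 :=
  tauWalk_congr_of_stepMat_pow_eq τ <| by
    rw [pow_one, stepMat_bipW_pow_three (by omega) (by omega)]

/-- on the complete bipartite graph `K_{a,b}` (`a, b ≥ 1`,
`a + b ≥ 3`), `τ^{(3)} = τ^{(1)}`, so the denominator of the critical
benefit-to-cost ratio vanishes. -/
theorem completeBipartite_tau3_eq_tau1 (a b : ℕ) (ha : 1 ≤ a) (hb : 1 ≤ b)
    (hab : 3 ≤ a + b)
    (τ : (Fin a ⊕ Fin b) → (Fin a ⊕ Fin b) → ℝ)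
    (hτ : IsCoalescent (bipW a b) τ) :
    tauWalk (bipW a b) τ 3 = tauWalk (bipW a b) τ 1 :=
  completeBipartite_tau3_eq_tau1_general a b ha hb τ

end EvoGraph
end
end

section
/- Let G be the unweighted graph obtained by joining two n-stars at their hubs (n ≥ 1): the vertices are two hubs H₁, H₂ and 2n leaves, each hub is joined by a weight-1 edge to its own n leaves, the two hubs are joined by a weight-1 edge, and all other weights are zero (so N = 2n + 2). Then the critical benefit-to-cost ratio of G satisfies (b/c)* = (n+1)²(10n² + 17n + 5) / (n(4n³ + 12n² + 11n + 5)); in particular (b/c)* → 5/2 as n → ∞. -/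
/-!
The automorphisms of the two stars (swap the stars, permute the leaves of a star) split the
vertex pairs into eight blocks: hub or leaf for each coordinate, same star or not. The step
matrix and all its powers are constant on these blocks, so each `τ^{(k)}` depends on `τ` only
through its five nontrivial block sums. Summing the coalescence equations over a block gives a
closed linear system for these block sums, solvable in closed form without using uniqueness of
`τ`; substituting into `τ^{(1)}, τ^{(2)}, τ^{(3)}` gives the ratio. The ratio is a rational
function of `1 / n` that is continuous at `0` with value `5 / 2`.
-/

open Finset Filter Asymptotics

noncomputable section

namespace EvoGraph

variable {V : Type*} [Fintype V] [DecidableEq V]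

/-- Two `n`-stars joined at their hubs: hubs `Sum.inl b` (`b : Bool`), leaves
`Sum.inr (b, ℓ)` belonging to hub `b`. Each hub is joined by a weight-1 edge to
its own `n` leaves and to the other hub; all other weights are zero. -/
def twoStarsW (n : ℕ) : (Bool ⊕ Bool × Fin n) → (Bool ⊕ Bool × Fin n) → ℝ
  | Sum.inl a, Sum.inl b => if a = b then 0 else 1
  | Sum.inl a, Sum.inr (b, _) => if a = b then 1 else 0
  | Sum.inr (b, _), Sum.inl a => if a = b then 1 else 0
  | Sum.inr _, Sum.inr _ => 0

theorem IsCoalescent.apply_self {α : Type*} [Fintype α] {w τ : α → α → ℝ}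
    (hτ : IsCoalescent w τ) (i : α) : τ i i = 0 :=
  hτ.2.1 i

theorem IsCoalescent.two_mul_apply {α : Type*} [Fintype α] {w τ : α → α → ℝ}
    (hτ : IsCoalescent w τ) {i j : α} (hij : i ≠ j) :
    2 * τ i j = 2 + ∑ k, step w i k * τ k j + ∑ k, step w j k * τ i k := by
  rw [hτ.2.2 i j hij, Finset.sum_add_distrib]
  ring

theorem tauWalk_eq_div (w τ : V → V → ℝ) (k : ℕ) :
    tauWalk w τ k = (∑ i, ∑ j, deg w i * stepN w k i j * τ i j) / Wtot w := by
  simp only [tauWalk, statDist, Finset.sum_div]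
  congr! 2
  ring

open Sum

abbrev TwoStarsVertex (n : ℕ) := Bool ⊕ Bool × Fin n

section TwoStars

variable {n : ℕ}

theorem sum_twoStarsVertex {M : Type*} [AddCommMonoid M] (f : TwoStarsVertex n → M) :
    ∑ v, f v = ∑ b, (f (inl b) + ∑ ℓ, f (inr (b, ℓ))) := by
  rw [Fintype.sum_sum_type, Fintype.sum_prod_type, Finset.sum_add_distrib]

/-- The entries of a matrix on the two stars that is invariant under the automorphisms of the
graph: `h`/`l` say whether row and column are a hub or a leaf, and the subscript is `₀` when
both lie in the same star, `₁` otherwise. -/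
structure TwoStarsBlocks where
  hh₀ : ℝ
  hh₁ : ℝ
  hl₀ : ℝ
  hl₁ : ℝ
  lh₀ : ℝ
  lh₁ : ℝ
  ll₀ : ℝ
  ll₁ : ℝ

namespace TwoStarsBlocks

def toMatrix (P : TwoStarsBlocks) (n : ℕ) : Matrix (TwoStarsVertex n) (TwoStarsVertex n) ℝ :=
  Matrix.of fun
    | inl a, inl b => if a = b then P.hh₀ else P.hh₁
    | inl a, inr (b, _) => if a = b then P.hl₀ else P.hl₁
    | inr (a, _), inl b => if a = b then P.lh₀ else P.lh₁
    | inr (a, _), inr (b, _) => if a = b then P.ll₀ else P.ll₁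

@[simp] theorem toMatrix_inl_inl (P : TwoStarsBlocks) (a b : Bool) :
    P.toMatrix n (inl a) (inl b) = if a = b then P.hh₀ else P.hh₁ := rfl

@[simp] theorem toMatrix_inl_inr (P : TwoStarsBlocks) (a b : Bool) (m : Fin n) :
    P.toMatrix n (inl a) (inr (b, m)) = if a = b then P.hl₀ else P.hl₁ := rfl

@[simp] theorem toMatrix_inr_inl (P : TwoStarsBlocks) (a b : Bool) (ℓ : Fin n) :
    P.toMatrix n (inr (a, ℓ)) (inl b) = if a = b then P.lh₀ else P.lh₁ := rfl

@[simp] theorem toMatrix_inr_inr (P : TwoStarsBlocks) (a b : Bool) (ℓ m : Fin n) :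
    P.toMatrix n (inr (a, ℓ)) (inr (b, m)) = if a = b then P.ll₀ else P.ll₁ := rfl

def mul (n : ℕ) (P Q : TwoStarsBlocks) : TwoStarsBlocks where
  hh₀ := P.hh₀ * Q.hh₀ + P.hh₁ * Q.hh₁ + n * (P.hl₀ * Q.lh₀ + P.hl₁ * Q.lh₁)
  hh₁ := P.hh₀ * Q.hh₁ + P.hh₁ * Q.hh₀ + n * (P.hl₀ * Q.lh₁ + P.hl₁ * Q.lh₀)
  hl₀ := P.hh₀ * Q.hl₀ + P.hh₁ * Q.hl₁ + n * (P.hl₀ * Q.ll₀ + P.hl₁ * Q.ll₁)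
  hl₁ := P.hh₀ * Q.hl₁ + P.hh₁ * Q.hl₀ + n * (P.hl₀ * Q.ll₁ + P.hl₁ * Q.ll₀)
  lh₀ := P.lh₀ * Q.hh₀ + P.lh₁ * Q.hh₁ + n * (P.ll₀ * Q.lh₀ + P.ll₁ * Q.lh₁)
  lh₁ := P.lh₀ * Q.hh₁ + P.lh₁ * Q.hh₀ + n * (P.ll₀ * Q.lh₁ + P.ll₁ * Q.lh₀)
  ll₀ := P.lh₀ * Q.hl₀ + P.lh₁ * Q.hl₁ + n * (P.ll₀ * Q.ll₀ + P.ll₁ * Q.ll₁)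
  ll₁ := P.lh₀ * Q.hl₁ + P.lh₁ * Q.hl₀ + n * (P.ll₀ * Q.ll₁ + P.ll₁ * Q.ll₀)

theorem toMatrix_mul (P Q : TwoStarsBlocks) :
    (mul n P Q).toMatrix n = P.toMatrix n * Q.toMatrix n := by
  ext (a | ⟨a, ℓ⟩) (b | ⟨b, m⟩) <;>
  cases a <;> cases b <;>
  simp only [Matrix.mul_apply, sum_twoStarsVertex] <;>
  simp [mul] <;> ring

end TwoStarsBlocks

theorem deg_twoStarsW_inl (a : Bool) : deg (twoStarsW n) (inl a) = n + 1 := by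
  simp only [deg, sum_twoStarsVertex]
  cases a <;> simp [twoStarsW, add_comm]

theorem deg_twoStarsW_inr (p : Bool × Fin n) : deg (twoStarsW n) (inr p) = 1 := by
  obtain ⟨b, ℓ⟩ := p
  simp only [deg, sum_twoStarsVertex]
  cases b <;> simp [twoStarsW]

theorem Wtot_twoStarsW : Wtot (twoStarsW n) = 4 * n + 2 := by
  simp only [Wtot, sum_twoStarsVertex]
  simp [deg_twoStarsW_inl, deg_twoStarsW_inr]
  ring

def twoStarsStep (n : ℕ) : TwoStarsBlocks where
  hh₀ := 0
  hh₁ := 1 / (n + 1)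
  hl₀ := 1 / (n + 1)
  hl₁ := 0
  lh₀ := 1
  lh₁ := 0
  ll₀ := 0
  ll₁ := 0

theorem stepMat_twoStarsW : stepMat (twoStarsW n) = (twoStarsStep n).toMatrix n := by
  ext (a | ⟨a, ℓ⟩) (b | ⟨b, m⟩) <;>
  cases a <;> cases b <;>
  simp [stepMat, step, deg_twoStarsW_inl, deg_twoStarsW_inr, twoStarsW, twoStarsStep]

theorem step_twoStarsW (i j : TwoStarsVertex n) :
    step (twoStarsW n) i j = (twoStarsStep n).toMatrix n i j :=
  congrFun₂ stepMat_twoStarsW i j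

theorem stepMat_twoStarsW_sq :
    stepMat (twoStarsW n) ^ 2 = ((twoStarsStep n).mul n (twoStarsStep n)).toMatrix n := by
  rw [sq, stepMat_twoStarsW, TwoStarsBlocks.toMatrix_mul]

theorem stepMat_twoStarsW_cube :
    stepMat (twoStarsW n) ^ 3 =
      (((twoStarsStep n).mul n (twoStarsStep n)).mul n (twoStarsStep n)).toMatrix n := by
  rw [pow_succ, stepMat_twoStarsW_sq, stepMat_twoStarsW, ← TwoStarsBlocks.toMatrix_mul]

theorem sum_step_twoStarsW_inl (f : TwoStarsVertex n → ℝ) (a : Bool) :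
    ∑ k, step (twoStarsW n) (inl a) k * f k = (f (inl !a) + ∑ ℓ, f (inr (a, ℓ))) / (n + 1) := by
  simp only [step_twoStarsW, sum_twoStarsVertex]
  cases a <;> simp [twoStarsStep, ← Finset.mul_sum] <;> ring

theorem sum_step_twoStarsW_inr (f : TwoStarsVertex n → ℝ) (b : Bool) (ℓ : Fin n) :
    ∑ k, step (twoStarsW n) (inr (b, ℓ)) k * f k = f (inl b) := by
  simp only [step_twoStarsW, sum_twoStarsVertex]
  cases b <;> simp [twoStarsStep]

section BlockSum

variable (τ : TwoStarsVertex n → TwoStarsVertex n → ℝ)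

def blockSum : TwoStarsBlocks where
  hh₀ := ∑ b, τ (inl b) (inl b)
  hh₁ := ∑ b, τ (inl b) (inl !b)
  hl₀ := ∑ b, ∑ ℓ, τ (inl b) (inr (b, ℓ))
  hl₁ := ∑ b, ∑ ℓ, τ (inl b) (inr (!b, ℓ))
  lh₀ := ∑ b, ∑ ℓ, τ (inr (b, ℓ)) (inl b)
  lh₁ := ∑ b, ∑ ℓ, τ (inr (b, ℓ)) (inl !b)
  ll₀ := ∑ b, ∑ ℓ, ∑ m, τ (inr (b, ℓ)) (inr (b, m))
  ll₁ := ∑ b, ∑ ℓ, ∑ m, τ (inr (b, ℓ)) (inr (!b, m))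

theorem tauWalk_twoStarsW {k : ℕ} {P : TwoStarsBlocks}
    (hP : stepMat (twoStarsW n) ^ k = P.toMatrix n) :
    tauWalk (twoStarsW n) τ k =
      ((n + 1) * (P.hh₀ * (blockSum τ).hh₀ + P.hh₁ * (blockSum τ).hh₁
          + P.hl₀ * (blockSum τ).hl₀ + P.hl₁ * (blockSum τ).hl₁)
        + (P.lh₀ * (blockSum τ).lh₀ + P.lh₁ * (blockSum τ).lh₁
          + P.ll₀ * (blockSum τ).ll₀ + P.ll₁ * (blockSum τ).ll₁)) / (4 * n + 2) := by
  rw [tauWalk_eq_div, Wtot_twoStarsW]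
  congr 1
  simp only [stepN, hP, sum_twoStarsVertex, deg_twoStarsW_inl, deg_twoStarsW_inr]
  simp [blockSum, Finset.sum_add_distrib, ← Finset.mul_sum]
  ring

theorem blockSum_hl₀_eq_sum_not : (blockSum τ).hl₀ = ∑ a, ∑ ℓ, τ (inl !a) (inr (!a, ℓ)) :=
  (Bool.involutive_not.bijective.sum_comp (fun b => ∑ ℓ, τ (inl b) (inr (b, ℓ)))).symm

theorem blockSum_hl₁_eq_sum_not : (blockSum τ).hl₁ = ∑ a, ∑ ℓ, τ (inl !a) (inr (a, ℓ)) := by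
  rw [← Bool.involutive_not.bijective.sum_comp]
  simp only [blockSum, Bool.not_not]

theorem blockSum_ll₀_eq_sum_comm :
    (blockSum τ).ll₀ = ∑ a, ∑ ℓ, ∑ m, τ (inr (a, m)) (inr (a, ℓ)) := by
  simp only [blockSum]
  exact Finset.sum_congr rfl fun _ _ => Finset.sum_comm

theorem blockSum_ll₁_eq_sum_comm :
    (blockSum τ).ll₁ = ∑ a, ∑ ℓ, ∑ m, τ (inr (a, m)) (inr (!a, ℓ)) := by
  simp only [blockSum]
  exact Finset.sum_congr rfl fun _ _ => Finset.sum_comm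

end BlockSum

namespace IsCoalescent

variable {τ : TwoStarsVertex n → TwoStarsVertex n → ℝ} (hτ : IsCoalescent (twoStarsW n) τ)
include hτ

theorem apply_inr_inl (p : Bool × Fin n) (b : Bool) : τ (inr p) (inl b) = τ (inl b) (inr p) :=
  hτ.1 _ _

theorem blockSum_hh₀ : (blockSum τ).hh₀ = 0 := by
  simp [blockSum, hτ.apply_self]

theorem blockSum_lh₀ : (blockSum τ).lh₀ = (blockSum τ).hl₀ := by
  simp only [blockSum, hτ.apply_inr_inl]

theorem blockSum_lh₁ : (blockSum τ).lh₁ = (blockSum τ).hl₁ := by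
  rw [blockSum_hl₁_eq_sum_not]
  simp only [blockSum, hτ.apply_inr_inl]

theorem blockSum_hh₁ :
    (n + 1) * (blockSum τ).hh₁ = 2 * (n + 1) + (blockSum τ).hl₁ := by
  have key : ∀ a, 2 * τ (inl a) (inl !a) =
      2 + (∑ ℓ, τ (inr (a, ℓ)) (inl !a) + ∑ ℓ, τ (inl a) (inr (!a, ℓ))) / (n + 1) := by
    intro a
    rw [hτ.two_mul_apply (by simp), sum_step_twoStarsW_inl, sum_step_twoStarsW_inl,
      Bool.not_not, hτ.apply_self, hτ.apply_self]
    ring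
  have hsum : 2 * (blockSum τ).hh₁ = 2 * 2 + ((blockSum τ).lh₁ + (blockSum τ).hl₁) / (n + 1) := by
    simp only [blockSum, Finset.mul_sum, key, Finset.sum_add_distrib, ← Finset.sum_div]
    simp
  rw [hτ.blockSum_lh₁] at hsum
  field_simp at hsum
  linarith

theorem blockSum_hl₀ :
    2 * (n + 1) * (blockSum τ).hl₀ = 4 * n * (n + 1) + (blockSum τ).hl₁ + (blockSum τ).ll₀ := by
  have key : ∀ a ℓ, 2 * τ (inl a) (inr (a, ℓ)) =
      2 + (τ (inl !a) (inr (a, ℓ)) + ∑ m, τ (inr (a, m)) (inr (a, ℓ))) / (n + 1) := by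
    intro a ℓ
    rw [hτ.two_mul_apply (by simp), sum_step_twoStarsW_inl, sum_step_twoStarsW_inr, hτ.apply_self,
      add_zero]
  have hsum : 2 * (blockSum τ).hl₀ =
      2 * (2 * n) + ((blockSum τ).hl₁ + (blockSum τ).ll₀) / (n + 1) := by
    rw [blockSum_hl₁_eq_sum_not, blockSum_ll₀_eq_sum_comm]
    simp only [blockSum, Finset.mul_sum, key, Finset.sum_add_distrib, ← Finset.sum_div]
    simp
    ring
  field_simp at hsum
  linarith

theorem blockSum_hl₁ :
    2 * (n + 1) * (blockSum τ).hl₁ =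
      4 * n * (n + 1) + (blockSum τ).hl₀ + (blockSum τ).ll₁ + n * (n + 1) * (blockSum τ).hh₁ := by
  have key : ∀ a ℓ, 2 * τ (inl a) (inr (!a, ℓ)) =
      2 + (τ (inl !a) (inr (!a, ℓ)) + ∑ m, τ (inr (a, m)) (inr (!a, ℓ))) / (n + 1)
        + τ (inl a) (inl !a) := by
    intro a ℓ
    rw [hτ.two_mul_apply (by simp), sum_step_twoStarsW_inl, sum_step_twoStarsW_inr]
  have hsum : 2 * (blockSum τ).hl₁ =
      2 * (2 * n) + ((blockSum τ).hl₀ + (blockSum τ).ll₁) / (n + 1) + n * (blockSum τ).hh₁ := by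
    rw [blockSum_hl₀_eq_sum_not, blockSum_ll₁_eq_sum_comm]
    simp only [blockSum, Finset.mul_sum, key, Finset.sum_add_distrib, ← Finset.sum_div]
    simp
    ring
  field_simp at hsum
  linarith

theorem blockSum_ll₀ :
    (blockSum τ).ll₀ + 2 * n + (blockSum τ).hl₀ = 2 * n ^ 2 + n * (blockSum τ).hl₀ := by
  -- the indicator repairs the diagonal `ℓ = m`, where the coalescence equation does not hold
  have key : ∀ a ℓ m, τ (inr (a, ℓ)) (inr (a, m)) +
      (if ℓ = m then 1 + τ (inl a) (inr (a, ℓ)) else 0) =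
      1 + (τ (inl a) (inr (a, m)) + τ (inl a) (inr (a, ℓ))) / 2 := by
    intro a ℓ m
    by_cases hℓm : ℓ = m
    · subst hℓm
      simp only [hτ.apply_self, if_true]
      ring
    · have h := hτ.two_mul_apply (i := inr (a, ℓ)) (j := inr (a, m)) (by simp [hℓm])
      rw [sum_step_twoStarsW_inr, sum_step_twoStarsW_inr, hτ.apply_inr_inl] at h
      simp only [hℓm, if_false]
      linarith
  have hsum := Fintype.sum_congr _ _ fun a => Fintype.sum_congr _ _ fun ℓ =>
    Fintype.sum_congr _ _ fun m => key a ℓ m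
  simp [Finset.sum_add_distrib, ← Finset.sum_div, ← Finset.mul_sum] at hsum
  simp only [blockSum, Fintype.sum_bool]
  linear_combination hsum

theorem blockSum_ll₁ : (blockSum τ).ll₁ = 2 * n ^ 2 + n * (blockSum τ).hl₁ := by
  have key : ∀ a ℓ m, 2 * τ (inr (a, ℓ)) (inr (!a, m)) =
      2 + τ (inl a) (inr (!a, m)) + τ (inl !a) (inr (a, ℓ)) := by
    intro a ℓ m
    rw [hτ.two_mul_apply (by simp), sum_step_twoStarsW_inr, sum_step_twoStarsW_inr,
      hτ.apply_inr_inl]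
  have hsum : 2 * (blockSum τ).ll₁ =
      2 * (2 * n ^ 2) + n * (blockSum τ).hl₁ + n * (blockSum τ).hl₁ := by
    nth_rw 2 [blockSum_hl₁_eq_sum_not]
    simp only [blockSum, Finset.mul_sum, key, Finset.sum_add_distrib]
    simp [← Finset.mul_sum]
    ring
  linarith

theorem blockSum_eq_closed_form :
    (blockSum τ).hh₁ = (8 * n ^ 3 + 40 * n ^ 2 + 34 * n + 10) / ((n + 1) * (2 * n + 5)) ∧
    (blockSum τ).hl₀ = (20 * n ^ 2 + 10 * n) / (2 * n + 5) ∧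
    (blockSum τ).hl₁ = (8 * n ^ 3 + 36 * n ^ 2 + 20 * n) / (2 * n + 5) ∧
    (blockSum τ).ll₀ = (24 * n ^ 3 - 4 * n ^ 2 - 20 * n) / (2 * n + 5) ∧
    (blockSum τ).ll₁ = (8 * n ^ 4 + 40 * n ^ 3 + 30 * n ^ 2) / (2 * n + 5) := by
  have e₁ := hτ.blockSum_hh₁
  have e₂ := hτ.blockSum_hl₀
  have e₃ := hτ.blockSum_hl₁
  have e₄ := hτ.blockSum_ll₀
  have e₅ := hτ.blockSum_ll₁
  have h₂ : (2 * (n : ℝ) + 5) * (blockSum τ).hl₀ = 20 * (n : ℝ) ^ 2 + 10 * (n : ℝ) := by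
    linear_combination 2 * e₂ + 2 * e₄ + e₃ + (n : ℝ) * e₁ + e₅
  have h₃ : (2 * (n : ℝ) + 5) * (blockSum τ).hl₁ =
      8 * (n : ℝ) ^ 3 + 36 * (n : ℝ) ^ 2 + 20 * (n : ℝ) := by
    linear_combination (2 * (n : ℝ) + 5) / 2 * (e₃ + (n : ℝ) * e₁ + e₅) + h₂ / 2
  have hx₁ : (n : ℝ) + 1 ≠ 0 := by positivity
  have hx₅ : 2 * (n : ℝ) + 5 ≠ 0 := by positivity
  refine ⟨?_, ?_, ?_, ?_, ?_⟩ <;> field_simp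
  · linear_combination (2 * (n : ℝ) + 5) * e₁ + h₃
  · linear_combination h₂
  · linear_combination h₃
  · linear_combination (2 * (n : ℝ) + 5) * e₄ + ((n : ℝ) - 1) * h₂
  · linear_combination (2 * (n : ℝ) + 5) * e₅ + (n : ℝ) * h₃

theorem tauWalk_two :
    tauWalk (twoStarsW n) τ 2 =
      2 * n * (10 * n ^ 2 + 17 * n + 5) / ((2 * n + 1) * (n + 1) * (2 * n + 5)) := by
  obtain ⟨hh₁, hl₀, hl₁, ll₀, ll₁⟩ := hτ.blockSum_eq_closed_form
  rw [tauWalk_twoStarsW τ stepMat_twoStarsW_sq, hτ.blockSum_hh₀, hτ.blockSum_lh₀,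
    hτ.blockSum_lh₁, hh₁, hl₀, hl₁, ll₀, ll₁]
  simp only [TwoStarsBlocks.mul, twoStarsStep]
  field_simp
  ring

theorem tauWalk_three_sub_tauWalk_one :
    tauWalk (twoStarsW n) τ 3 - tauWalk (twoStarsW n) τ 1 =
      2 * n ^ 2 * (4 * n ^ 3 + 12 * n ^ 2 + 11 * n + 5) /
        ((2 * n + 1) * (n + 1) ^ 3 * (2 * n + 5)) := by
  obtain ⟨hh₁, hl₀, hl₁, ll₀, ll₁⟩ := hτ.blockSum_eq_closed_form
  rw [tauWalk_twoStarsW τ stepMat_twoStarsW_cube,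
    tauWalk_twoStarsW τ ((pow_one _).trans stepMat_twoStarsW), hτ.blockSum_hh₀,
    hτ.blockSum_lh₀, hτ.blockSum_lh₁, hh₁, hl₀, hl₁, ll₀, ll₁]
  simp only [TwoStarsBlocks.mul, twoStarsStep]
  field_simp
  ring

end IsCoalescent

end TwoStars

theorem tendsto_twoStars_bc :
    Tendsto
      (fun n : ℕ =>
        ((n : ℝ) + 1) ^ 2 * (10 * (n : ℝ) ^ 2 + 17 * n + 5) /
          ((n : ℝ) * (4 * (n : ℝ) ^ 3 + 12 * (n : ℝ) ^ 2 + 11 * n + 5)))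
      atTop (nhds (5 / 2)) := by
  let g : ℝ → ℝ := fun t =>
    (1 + t) ^ 2 * (10 + 17 * t + 5 * t ^ 2) / (4 + 12 * t + 11 * t ^ 2 + 5 * t ^ 3)
  have hg : ContinuousAt g 0 := by fun_prop (disch := norm_num)
  have hlim := hg.tendsto.comp tendsto_one_div_atTop_nhds_zero_nat
  rw [show g 0 = 5 / 2 by norm_num [g]] at hlim
  refine hlim.congr' ?_
  filter_upwards [eventually_ne_atTop 0] with n hn
  have hn' : (n : ℝ) ≠ 0 := by exact_mod_cast hn
  simp only [Function.comp_apply, g]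
  field_simp

/-- for two `n`-stars joined at their hubs,
`(b/c)* = (n+1)²(10n² + 17n + 5) / (n(4n³ + 12n² + 11n + 5))`, which tends to
`5/2` as `n → ∞`. -/
theorem twoStars_bc :
    (∀ n : ℕ, 1 ≤ n →
      ∀ τ : (Bool ⊕ Bool × Fin n) → (Bool ⊕ Bool × Fin n) → ℝ,
        IsCoalescent (twoStarsW n) τ →
        tauWalk (twoStarsW n) τ 2 /
            (tauWalk (twoStarsW n) τ 3 - tauWalk (twoStarsW n) τ 1) =
          ((n : ℝ) + 1) ^ 2 * (10 * (n : ℝ) ^ 2 + 17 * n + 5) /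
            ((n : ℝ) * (4 * (n : ℝ) ^ 3 + 12 * (n : ℝ) ^ 2 + 11 * n + 5))) ∧
    Tendsto
      (fun n : ℕ =>
        ((n : ℝ) + 1) ^ 2 * (10 * (n : ℝ) ^ 2 + 17 * n + 5) /
          ((n : ℝ) * (4 * (n : ℝ) ^ 3 + 12 * (n : ℝ) ^ 2 + 11 * n + 5)))
      atTop (nhds (5 / 2)) := by
  refine ⟨fun n hn τ hτ => ?_, tendsto_twoStars_bc⟩
  have hn₀ : (n : ℝ) ≠ 0 := by positivity
  rw [hτ.tauWalk_two, hτ.tauWalk_three_sub_tauWalk_one]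
  field_simp

end EvoGraph
end
end
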